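/- Lagrangian preservation (other direction): if φ is sufficient for C given T, then for every β ≥ 0 and every encoder p(X|T) satisfying C ↔ T ↔ X, the marginalised encoder q(x|z) := Σ_t p(x|t)p(t|φ=z) satisfies I_p(X;T) − β·I_p(X;C) ≥ I_q(X;φ(T)) − β·I_q(X;C). Consequently the two Lagrangian infima are equal. -/

import Mathlib

/-!
If `φ` is sufficient, `p(t, c) = p(t) κ(φ t, c)`, so the `(C, X)` joint of the marginalised encoder
coincides with that of the original encoder, while its `(φ(T), X)` joint is the pushforward of the
`(T, X)` joint along `φ`, which by the log-sum inequality can only lower mutual information.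
Conversely an encoder `f` of `φ(T)` lifts to `f ∘ φ` with the same Lagrangian. So each set of
Lagrangian values is bounded below pointwise by the other, and the infima agree.
-/

open scoped BigOperators

/-- Finite-alphabet mutual information of a joint distribution `p` on `A × B`. -/
noncomputable def mi {A B : Type*} [Fintype A] [Fintype B] (p : A → B → ℝ) : ℝ :=
  ∑ a, ∑ b, p a b * Real.log (p a b / ((∑ b', p a b') * (∑ a', p a' b)))

/-- Finite-alphabet conditional mutual information `I(A;B∣Z)` of a joint on `A × B × Z`. -/
noncomputable def cmi {A B Z : Type*} [Fintype A] [Fintype B] [Fintype Z]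
    (p : A → B → Z → ℝ) : ℝ :=
  ∑ z, ∑ a, ∑ b, p a b z *
    Real.log ((p a b z * (∑ a', ∑ b', p a' b' z)) /
      ((∑ b', p a b' z) * (∑ a', p a' b z)))

/-- `A` and `B` are conditionally independent given `Z` (Markov chain `A ↔ Z ↔ B`),
for a joint distribution `p` on `A × B × Z`. -/
def CondIndep {A B Z : Type*} [Fintype A] [Fintype B] (p : A → B → Z → ℝ) : Prop :=
  ∀ a b z, p a b z * (∑ a', ∑ b', p a' b' z) = (∑ b', p a b' z) * (∑ a', p a' b z)

/-- A stochastic kernel (each row nonnegative and summing to one). -/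
def IsKernel {A B : Type*} [Fintype B] (q : A → B → ℝ) : Prop :=
  (∀ a b, 0 ≤ q a b) ∧ ∀ a, ∑ b, q a b = 1

/-- The IB Lagrangian `I(X;T) − β·I(X;C)` of an encoder `e = p(X∣T)` for the joint
`p` on `T × C`, computed under the induced joint `p(t,c)·e(x∣t)`. -/
noncomputable def fullLag {T C X : Type*} [Fintype T] [Fintype C] [Fintype X]
    (p : T → C → ℝ) (β : ℝ) (e : T → X → ℝ) : ℝ :=
  mi (fun t x => (∑ c, p t c) * e t x) - β * mi (fun c x => ∑ t, p t c * e t x)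

/-- The pushforward joint of `(φ(T), C)`. -/
noncomputable def pushJoint {T C Z : Type*} [Fintype T] [DecidableEq Z]
    (p : T → C → ℝ) (φ : T → Z) (z : Z) (c : C) : ℝ :=
  ∑ t, if φ t = z then p t c else 0

/-- The marginalised encoder `q(x∣z) := Σ_t p(x∣t) p(t∣φ=z)`, written without
conditionals as a ratio of marginals of the induced joint `p(t,c)·e(x∣t)`. -/
noncomputable def margEnc {T C Z X : Type*} [Fintype T] [Fintype C] [DecidableEq Z]
    (p : T → C → ℝ) (φ : T → Z) (e : T → X → ℝ) (x : X) (z : Z) : ℝ :=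
  (∑ t, if φ t = z then (∑ c, p t c) * e t x else 0) /
    (∑ t, if φ t = z then (∑ c, p t c) else 0)

open Real

theorem sum_mul_log_sum_div_le {ι : Type*} (s : Finset ι) (a b : ι → ℝ)
    (ha : ∀ i ∈ s, 0 ≤ a i) (hb : ∀ i ∈ s, 0 ≤ b i) (hab : ∀ i ∈ s, b i = 0 → a i = 0) :
    (∑ i ∈ s, a i) * log ((∑ i ∈ s, a i) / ∑ i ∈ s, b i) ≤ ∑ i ∈ s, a i * log (a i / b i) := by
  rcases (Finset.sum_nonneg hb).eq_or_lt with hB | hB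
  · rw [← hB, div_zero, log_zero, mul_zero]
    refine Finset.sum_nonneg fun i hi => ?_
    rw [hab i hi ((Finset.sum_eq_zero_iff_of_nonneg hb).1 hB.symm i hi), zero_mul]
  set B := ∑ i ∈ s, b i
  have hweight : ∀ i ∈ s, b i / B * (a i / b i) = a i / B := fun i hi => by
    rcases eq_or_ne (b i) 0 with h | h
    · simp [h, hab i hi h]
    · field_simp
  -- Jensen for the convex function `x ↦ x log x`, with weights `b i / B` at the points `a i / b i`
  have jensen := convexOn_mul_log.map_sum_le (t := s) (w := fun i => b i / B)
    (p := fun i => a i / b i) (fun i hi => div_nonneg (hb i hi) hB.le)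
    (by rw [← Finset.sum_div, div_self hB.ne'])
    (fun i hi => Set.mem_Ici.2 (div_nonneg (ha i hi) (hb i hi)))
  have hmean : ∑ i ∈ s, b i / B * (a i / b i) = (∑ i ∈ s, a i) / B := by
    rw [Finset.sum_div]; exact Finset.sum_congr rfl hweight
  have hvalue : ∑ i ∈ s, b i / B * (a i / b i * log (a i / b i)) =
      (∑ i ∈ s, a i * log (a i / b i)) / B := by
    rw [Finset.sum_div]
    exact Finset.sum_congr rfl fun i hi => by rw [← mul_assoc, hweight i hi, div_mul_eq_mul_div]
  simp only [smul_eq_mul] at jensen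
  rwa [hmean, hvalue, div_mul_eq_mul_div, div_le_div_iff_of_pos_right hB] at jensen

theorem mi_mul_left {A B : Type*} [Fintype A] [Fintype B] (w : A → ℝ) (k : A → B → ℝ) :
    mi (fun a b => w a * k a b) =
      ∑ a, w a * ∑ b, k a b * log (k a b / ((∑ b', k a b') * ∑ a', w a' * k a' b)) := by
  unfold mi
  refine Finset.sum_congr rfl fun a _ => ?_
  rw [Finset.mul_sum]
  refine Finset.sum_congr rfl fun b _ => ?_
  rcases eq_or_ne (w a) 0 with h | h
  · simp [h]
  · beta_reduce
    rw [← Finset.mul_sum, mul_assoc (w a) (∑ b', k a b'), mul_div_mul_left _ _ h, mul_assoc]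

theorem fullLag_congr {A C X : Type*} [Fintype A] [Fintype C] [Fintype X] {q : A → C → ℝ}
    (hq : ∀ a c, 0 ≤ q a c) (β : ℝ) {f g : A → X → ℝ} (hfg : ∀ a, ∑ c, q a c ≠ 0 → f a = g a) :
    fullLag q β f = fullLag q β g := by
  have h : ∀ a c x, q a c * f a x = q a c * g a x := fun a c x => by
    by_cases ha : ∑ c, q a c = 0
    · rw [congrFun ((Fintype.sum_eq_zero_iff_of_nonneg (hq a)).1 ha) c, Pi.zero_apply, zero_mul,
        zero_mul]
    · rw [hfg a ha]
  unfold fullLag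
  simp only [Finset.sum_mul, h]

section Fibers

variable {T Z X : Type*} [Fintype T] [Fintype Z] [DecidableEq Z] (φ : T → Z)

theorem sum_fiber_mul (u : T → ℝ) (v : Z → ℝ) :
    ∑ z, (∑ t, if φ t = z then u t else 0) * v z = ∑ t, u t * v (φ t) := by
  simp only [Finset.sum_mul, ite_mul, zero_mul]
  rw [Finset.sum_comm]
  simp

theorem sum_sum_ite_fiber (u : T → ℝ) : ∑ z, ∑ t, (if φ t = z then u t else 0) = ∑ t, u t := by
  simpa using sum_fiber_mul φ u 1

theorem mi_fiber_le [Fintype X] (r : T → X → ℝ) (hr : ∀ t x, 0 ≤ r t x) :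
    mi (fun z x => ∑ t, if φ t = z then r t x else 0) ≤ mi r := by
  have hrow : ∀ z, ∑ x, ∑ t, (if φ t = z then r t x else 0) =
      ∑ t, if φ t = z then ∑ x, r t x else 0 := fun z => by
    rw [Finset.sum_comm]
    simp only [Finset.sum_ite_irrel, Finset.sum_const_zero]
  unfold mi
  simp only [hrow, sum_sum_ite_fiber]
  rw [← Finset.sum_fiberwise Finset.univ φ]
  refine Finset.sum_le_sum fun z _ => ?_
  rw [Finset.sum_comm]
  refine Finset.sum_le_sum fun x _ => ?_
  have hle_row : ∀ t, r t x ≤ ∑ x', r t x' := fun t =>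
    Finset.single_le_sum (fun x' _ => hr t x') (Finset.mem_univ x)
  have hle_col : ∀ t, r t x ≤ ∑ t', r t' x := fun t =>
    Finset.single_le_sum (fun t' _ => hr t' x) (Finset.mem_univ t)
  have := sum_mul_log_sum_div_le {t | φ t = z} (fun t => r t x)
    (fun t => (∑ x', r t x') * ∑ t', r t' x) (fun t _ => hr t x)
    (fun t _ => mul_nonneg ((hr t x).trans (hle_row t)) ((hr t x).trans (hle_col t)))
    (fun t _ h => (mul_eq_zero.1 h).elim (fun h => le_antisymm (h ▸ hle_row t) (hr t x))
      (fun h => le_antisymm (h ▸ hle_col t) (hr t x)))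
  rwa [← Finset.sum_mul, Finset.sum_filter, Finset.sum_filter] at this

theorem mi_comp_fiber [Fintype X] (w : T → ℝ) (f : Z → X → ℝ) :
    mi (fun t x => w t * f (φ t) x) =
      mi (fun z x => (∑ t, if φ t = z then w t else 0) * f z x) := by
  simp only [mi_mul_left, sum_fiber_mul]

end Fibers

section Sufficiency

variable {T C Z X : Type*} [Fintype T] [DecidableEq Z] (φ : T → Z) (p : T → C → ℝ)

theorem sum_pushJoint [Fintype C] (z : Z) :
    ∑ c, pushJoint p φ z c = ∑ t, if φ t = z then ∑ c, p t c else 0 := by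
  unfold pushJoint
  rw [Finset.sum_comm]
  simp only [Finset.sum_ite_irrel, Finset.sum_const_zero]

theorem fullLag_comp [Fintype C] [Fintype Z] [Fintype X] (β : ℝ) (f : Z → X → ℝ) :
    fullLag p β (fun t => f (φ t)) = fullLag (pushJoint p φ) β f := by
  unfold fullLag
  rw [mi_comp_fiber]
  simp only [sum_pushJoint]
  congr 3
  funext c x
  exact (sum_fiber_mul φ (fun t => p t c) (fun z => f z x)).symm

variable {φ p}

theorem pushJoint_nonneg (hpos : ∀ t c, 0 ≤ p t c) (z : Z) (c : C) : 0 ≤ pushJoint p φ z c :=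
  Finset.sum_nonneg fun t _ => ite_nonneg (hpos t c) le_rfl

theorem eq_zero_of_sum_pushJoint_eq_zero [Fintype C] (hpos : ∀ t c, 0 ≤ p t c) {z : Z}
    (hz : ∑ c, pushJoint p φ z c = 0) {t : T} (ht : φ t = z) (c : C) : p t c = 0 := by
  have hle : p t c ≤ pushJoint p φ z c := by
    unfold pushJoint
    simpa [ht] using Finset.single_le_sum (f := fun t' => if φ t' = z then p t' c else 0)
      (fun t' _ => ite_nonneg (hpos t' c) le_rfl) (Finset.mem_univ t)
  have hc : pushJoint p φ z c = 0 :=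
    congrFun ((Fintype.sum_eq_zero_iff_of_nonneg (pushJoint_nonneg hpos z)).1 hz) c
  exact le_antisymm (hc ▸ hle) (hpos t c)

theorem sum_pushJoint_mul_margEnc [Fintype C] (hpos : ∀ t c, 0 ≤ p t c) (e : T → X → ℝ)
    (z : Z) (x : X) :
    (∑ c, pushJoint p φ z c) * margEnc p φ e x z =
      ∑ t, if φ t = z then (∑ c, p t c) * e t x else 0 := by
  rw [margEnc, ← sum_pushJoint, ← mul_div_assoc, mul_div_cancel_left_of_imp]
  intro hz
  refine Finset.sum_eq_zero fun t _ => ?_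
  split_ifs with ht
  · simp [eq_zero_of_sum_pushJoint_eq_zero hpos hz ht]
  · rfl

theorem pushJoint_mul_margEnc [Fintype C] (hpos : ∀ t c, 0 ≤ p t c)
    (hsuff : CondIndep (fun c t z => if φ t = z then p t c else 0))
    (e : T → X → ℝ) (z : Z) (c : C) (x : X) :
    pushJoint p φ z c * margEnc p φ e x z = ∑ t, if φ t = z then p t c * e t x else 0 := by
  have hfactor : ∀ t, φ t = z → p t c * ∑ c', pushJoint p φ z c' =
      pushJoint p φ z c * ∑ c', p t c' := fun t ht => by
    simpa [ht, pushJoint] using hsuff c t z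
  have hnum : pushJoint p φ z c * ∑ t, (if φ t = z then (∑ c', p t c') * e t x else 0) =
      (∑ c', pushJoint p φ z c') * ∑ t, if φ t = z then p t c * e t x else 0 := by
    simp only [Finset.mul_sum, mul_ite, mul_zero]
    refine Finset.sum_congr rfl fun t _ => ?_
    split_ifs with ht
    · rw [← mul_assoc, ← hfactor t ht]
      ring
    · rfl
  rw [margEnc, ← sum_pushJoint, ← mul_div_assoc, hnum, mul_div_cancel_left_of_imp]
  intro hz
  refine Finset.sum_eq_zero fun t _ => ?_
  split_ifs with ht
  · simp [eq_zero_of_sum_pushJoint_eq_zero hpos hz ht]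
  · rfl

theorem fullLag_margEnc_le [Fintype C] [Fintype Z] [Fintype X] (hpos : ∀ t c, 0 ≤ p t c)
    (hsuff : CondIndep (fun c t z => if φ t = z then p t c else 0)) (β : ℝ) {e : T → X → ℝ}
    (he : ∀ t x, 0 ≤ e t x) :
    fullLag (pushJoint p φ) β (fun z x => margEnc p φ e x z) ≤ fullLag p β e := by
  unfold fullLag
  simp only [sum_pushJoint_mul_margEnc hpos, pushJoint_mul_margEnc hpos hsuff, sum_sum_ite_fiber]
  exact sub_le_sub_right
    (mi_fiber_le φ _ fun t x => mul_nonneg (Finset.sum_nonneg fun c _ => hpos t c) (he t x)) _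

theorem exists_isKernel_eq_margEnc [Fintype C] [Fintype X] [Nonempty X]
    (hpos : ∀ t c, 0 ≤ p t c) {e : T → X → ℝ} (he : IsKernel e) :
    ∃ f : Z → X → ℝ, IsKernel f ∧
      ∀ z, ∑ c, pushJoint p φ z c ≠ 0 → f z = fun x => margEnc p φ e x z := by
  -- on a fibre of mass zero `margEnc` is `0 / 0 = 0`, so it is patched there by the uniform law
  refine ⟨fun z x => if ∑ c, pushJoint p φ z c = 0 then (Fintype.card X : ℝ)⁻¹
    else margEnc p φ e x z, ⟨fun z x => ?_, fun z => ?_⟩, fun z hz => by simp only [if_neg hz]⟩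
  · dsimp only
    split_ifs
    · positivity
    · exact div_nonneg
        (Finset.sum_nonneg fun t _ => ite_nonneg
          (mul_nonneg (Finset.sum_nonneg fun c _ => hpos t c) (he.1 t x)) le_rfl)
        (Finset.sum_nonneg fun t _ => ite_nonneg (Finset.sum_nonneg fun c _ => hpos t c) le_rfl)
  · dsimp only
    split_ifs with hz
    · simp
    · rw [sum_pushJoint] at hz
      simp only [margEnc, ← Finset.sum_div]
      rw [Finset.sum_comm]
      simp only [Finset.sum_ite_irrel, Finset.sum_const_zero, ← Finset.mul_sum, he.2, mul_one]
      exact div_self hz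

end Sufficiency

theorem stmt10_general {T C Z X : Type*} [Fintype T] [Fintype C] [Fintype Z] [DecidableEq Z]
    [Fintype X] [Nonempty X]
    (φ : T → Z) (p : T → C → ℝ) (β : ℝ)
    (hpos : ∀ t c, 0 ≤ p t c)
    (hsuff : CondIndep (fun c t z => if φ t = z then p t c else 0)) :
    (∀ e : T → X → ℝ, IsKernel e →
      mi (fun z x => (∑ c, pushJoint p φ z c) * margEnc p φ e x z)
        - β * mi (fun c x => ∑ z, pushJoint p φ z c * margEnc p φ e x z)
        ≤ fullLag p β e) ∧
    sInf {v : ℝ | ∃ e : T → X → ℝ, IsKernel e ∧ v = fullLag p β e} =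
      sInf {v : ℝ | ∃ f : Z → X → ℝ, IsKernel f ∧ v = fullLag (pushJoint p φ) β f} := by
  have hmarg (e : T → X → ℝ) (he : IsKernel e) :
      fullLag (pushJoint p φ) β (fun z x => margEnc p φ e x z) ≤ fullLag p β e :=
    fullLag_margEnc_le hpos hsuff β he.1
  refine ⟨hmarg, csInf_eq_csInf_of_forall_exists_le ?_ ?_⟩
  · rintro _ ⟨e, he, rfl⟩
    obtain ⟨f, hf, hfe⟩ := exists_isKernel_eq_margEnc (φ := φ) hpos he
    exact ⟨_, ⟨f, hf, rfl⟩, (fullLag_congr (pushJoint_nonneg hpos) β hfe).trans_le (hmarg e he)⟩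
  · rintro _ ⟨f, hf, rfl⟩
    exact ⟨_, ⟨fun t => f (φ t), ⟨fun t => hf.1 (φ t), fun t => hf.2 (φ t)⟩, rfl⟩,
      (fullLag_comp φ p β f).le⟩

/-- Lagrangian preservation (other direction): if `φ` is
sufficient for `C` given `T`, every encoder `p(X∣T)` dominates its marginalisation
`q(x∣z) := Σ_t p(x∣t)p(t∣φ=z)` in Lagrangian value, and consequently the two
Lagrangian infima are equal. -/
theorem stmt10 {T C Z X : Type*} [Fintype T] [Fintype C] [Fintype Z] [DecidableEq Z]
    [Fintype X] [Nonempty X]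
    (φ : T → Z) (p : T → C → ℝ) (β : ℝ) (hβ : 0 ≤ β)
    (hpos : ∀ t c, 0 ≤ p t c)
    (hsum : ∑ t, ∑ c, p t c = 1)
    (hsuff : CondIndep (fun c t z => if φ t = z then p t c else 0)) :
    (∀ e : T → X → ℝ, IsKernel e →
      mi (fun z x => (∑ c, pushJoint p φ z c) * margEnc p φ e x z)
        - β * mi (fun c x => ∑ z, pushJoint p φ z c * margEnc p φ e x z)
        ≤ fullLag p β e) ∧
    sInf {v : ℝ | ∃ e : T → X → ℝ, IsKernel e ∧ v = fullLag p β e} =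
      sInf {v : ℝ | ∃ f : Z → X → ℝ, IsKernel f ∧ v = fullLag (pushJoint p φ) β f} :=
  stmt10_general φ p β hpos hsuff
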